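/- arXiv:2106.12796 — 2 statements merged into one kernel-verified Lean document; each statement's English description precedes it below -/
import Mathlib

section
/- Let E ⊂ ℝ^k, π and q strictly positive probability densities on E with respect to Lebesgue measure, and suppose q(y)/π(y) > β for all y ∈ E, where β > 0. In the independent Hastings algorithm with proposal density q and acceptance probability α(x,y) = min(1, π(y)q(x)/(π(x)q(y))), the sub-density p(x,y) = q(y)α(x,y) of the transition kernel satisfies p(x,y) ≥ β π(y) for all x, y ∈ E. Consequently P(x, A) ≥ β ∫_A π(y) dy for every x ∈ E and measurable A ⊆ E. -/
open MeasureTheory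

/-- Doeblin minorization for the independent Hastings algorithm: if `q(y)/π(y) > β` on `E`,
then the acceptance sub-density `p(x,y) = q(y) α(x,y)` satisfies `p(x,y) ≥ β π(y)`, and
consequently `P(x,A) ≥ β ∫_A π(y) dy` for all measurable `A ⊆ E`. -/
theorem stmt6 {k : ℕ} (E : Set (Fin k → ℝ)) (π q : (Fin k → ℝ) → ℝ) (β : ℝ) (hβ : 0 < β)
    (hπpos : ∀ y ∈ E, 0 < π y) (hqpos : ∀ y ∈ E, 0 < q y)
    (hratio : ∀ y ∈ E, β < q y / π y) :
    let α := fun x y => min 1 (π y * q x / (π x * q y))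
    let p := fun x y => q y * α x y
    (∀ x ∈ E, ∀ y ∈ E, β * π y ≤ p x y) ∧
    (∀ x ∈ E, ∀ A : Set (Fin k → ℝ), A ⊆ E → MeasurableSet A →
      ENNReal.ofReal β * ∫⁻ y in A, ENNReal.ofReal (π y) ≤ ∫⁻ y in A, ENNReal.ofReal (p x y)) := by
  intro α p
  have key : ∀ x ∈ E, ∀ y ∈ E, β * π y ≤ p x y := by
    intro x hx y hy
    have hπx := hπpos x hx
    have hπy := hπpos y hy
    have hqx := hqpos x hx
    have hqy := hqpos y hy
    have hbx : β * π x < q x := by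
      have := hratio x hx
      calc β * π x < (q x / π x) * π x := by
            exact mul_lt_mul_of_pos_right this hπx
        _ = q x := by field_simp
    have hby : β * π y < q y := by
      have := hratio y hy
      calc β * π y < (q y / π y) * π y := by
            exact mul_lt_mul_of_pos_right this hπy
        _ = q y := by field_simp
    rcases le_total 1 (π y * q x / (π x * q y)) with h | h
    · have : α x y = 1 := min_eq_left h
      simp only [p, this, mul_one]
      exact hby.le
    · have : α x y = π y * q x / (π x * q y) := min_eq_right h
      simp only [p, this]
      have : q y * (π y * q x / (π x * q y)) = π y * (q x / π x) := by
        field_simp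
      rw [this]
      calc β * π y = π y * β := mul_comm _ _
        _ ≤ π y * (q x / π x) := by
            exact mul_le_mul_of_nonneg_left (hratio x hx).le hπy.le
  refine ⟨key, ?_⟩
  intro x hx A hAE hA
  rw [← lintegral_const_mul' _ _ ENNReal.ofReal_ne_top]
  refine lintegral_mono_ae ?_
  filter_upwards [ae_restrict_mem hA] with y hy
  rw [← ENNReal.ofReal_mul hβ.le]
  exact ENNReal.ofReal_le_ofReal (key x hx y (hAE hy))
end

section
/- Let A and B be real symmetric n×n matrices. Then the ℓ₂ rearrangement distance between their spectra satisfies δ₂(λ(A), λ(B)) ≤ ‖A − B‖_F, where ‖·‖_F is the Frobenius norm. -/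
open Matrix Finset

private lemma hw_conj_mul {n : ℕ} (U X Y : Matrix (Fin n) (Fin n) ℝ)
    (h : star U * U = 1) :
    (U * X * star U) * (U * Y * star U) = U * (X * Y) * star U := by
  have h2 : star U * (U * (Y * star U)) = Y * star U := by
    rw [← Matrix.mul_assoc, h, Matrix.one_mul]
  simp only [Matrix.mul_assoc, h2]

private lemma hw_trace_conj {n : ℕ} (U X : Matrix (Fin n) (Fin n) ℝ)
    (h : star U * U = 1) :
    (U * X * star U).trace = X.trace := by
  rw [Matrix.trace_mul_comm, ← Matrix.mul_assoc, h, Matrix.one_mul]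

/-- Hoffman–Wielandt inequality for real symmetric matrices: the `ℓ₂` rearrangement
distance between the spectra of `A` and `B` is at most the Frobenius norm `‖A - B‖_F`
(stated in squared form: some permutation matches eigenvalues within Frobenius error). -/
theorem stmt13 {n : ℕ} (A B : Matrix (Fin n) (Fin n) ℝ)
    (hA : A.IsHermitian) (hB : B.IsHermitian) :
    ∃ σ : Equiv.Perm (Fin n),
      ∑ i, (hA.eigenvalues i - hB.eigenvalues (σ i)) ^ 2
        ≤ ∑ i, ∑ j, (A i j - B i j) ^ 2 := by
  classical
  set lam := hA.eigenvalues with hlam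
  set mu := hB.eigenvalues with hmu
  set U : Matrix (Fin n) (Fin n) ℝ := (hA.eigenvectorUnitary : Matrix (Fin n) (Fin n) ℝ)
    with hUdef
  set V : Matrix (Fin n) (Fin n) ℝ := (hB.eigenvectorUnitary : Matrix (Fin n) (Fin n) ℝ)
    with hVdef
  set D : Matrix (Fin n) (Fin n) ℝ := Matrix.diagonal lam with hDdef
  set E : Matrix (Fin n) (Fin n) ℝ := Matrix.diagonal mu with hEdef
  have hU1 : star U * U = 1 := Unitary.coe_star_mul_self hA.eigenvectorUnitary
  have hU2 : U * star U = 1 := Unitary.coe_mul_star_self hA.eigenvectorUnitary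
  have hV1 : star V * V = 1 := Unitary.coe_star_mul_self hB.eigenvectorUnitary
  have hV2 : V * star V = 1 := Unitary.coe_mul_star_self hB.eigenvectorUnitary
  have hAspec : A = U * D * star U := by
    have := hA.spectral_theorem
    simpa [RCLike.ofReal_real_eq_id] using this
  have hBspec : B = V * E * star V := by
    have := hB.spectral_theorem
    simpa [RCLike.ofReal_real_eq_id] using this
  set W : Matrix (Fin n) (Fin n) ℝ := star U * V with hWdef
  have hWstar : star W = star V * U := by
    rw [hWdef, Matrix.star_mul, star_star]
  have hWr : W * star W = 1 := by
    rw [hWdef, hWstar, Matrix.mul_assoc, ← Matrix.mul_assoc V, hV2, Matrix.one_mul, hU1]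
  have hWc : star W * W = 1 := by
    rw [hWdef, hWstar, Matrix.mul_assoc, ← Matrix.mul_assoc U, hU2, Matrix.one_mul, hV1]
  -- the doubly stochastic matrix of squared entries
  set S : Matrix (Fin n) (Fin n) ℝ := Matrix.of (fun i j => (W i j) ^ 2) with hSdef
  have hSapp : ∀ i j, S i j = (W i j) ^ 2 := fun i j => rfl
  have hrow : ∀ i, ∑ j, S i j = 1 := by
    intro i
    have h := Matrix.ext_iff.2 hWr i i
    simp only [Matrix.mul_apply, Matrix.star_apply, star_trivial,
      Matrix.one_apply_eq] at h
    calc ∑ j, S i j = ∑ j, W i j * W i j := by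
          exact Finset.sum_congr rfl fun j _ => by rw [hSapp, sq]
      _ = 1 := h
  have hcol : ∀ j, ∑ i, S i j = 1 := by
    intro j
    have h := Matrix.ext_iff.2 hWc j j
    simp only [Matrix.mul_apply, Matrix.star_apply, star_trivial,
      Matrix.one_apply_eq] at h
    calc ∑ i, S i j = ∑ i, W i j * W i j := by
          exact Finset.sum_congr rfl fun i _ => by rw [hSapp, sq]
      _ = 1 := h
  have hS : S ∈ doublyStochastic ℝ (Fin n) := by
    rw [mem_doublyStochastic_iff_sum]
    exact ⟨fun i j => sq_nonneg _, hrow, hcol⟩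
  obtain ⟨w, hw0, hw1, hwS⟩ := exists_eq_sum_perm_of_mem_doublyStochastic hS
  -- trace computations
  have symmA : ∀ i j, A j i = A i j := fun i j => by
    have := hA.apply i j; simpa using this
  have symmB : ∀ i j, B j i = B i j := fun i j => by
    have := hB.apply i j; simpa using this
  have traceA : ∑ i, ∑ j, A i j * A i j = ∑ i, lam i ^ 2 := by
    have h1 : ∑ i, ∑ j, A i j * A i j = (A * A).trace := by
      simp only [Matrix.trace, Matrix.diag, Matrix.mul_apply]
      exact Finset.sum_congr rfl fun i _ => Finset.sum_congr rfl fun j _ => by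
        rw [symmA i j]
    have h2 : (A * A).trace = ∑ i, lam i ^ 2 := by
      rw [hAspec, hw_conj_mul U D D hU1, hw_trace_conj U _ hU1, hDdef,
        Matrix.diagonal_mul_diagonal, Matrix.trace_diagonal]
      exact Finset.sum_congr rfl fun i _ => (sq (lam i)).symm
    rw [h1, h2]
  have traceB : ∑ i, ∑ j, B i j * B i j = ∑ i, mu i ^ 2 := by
    have h1 : ∑ i, ∑ j, B i j * B i j = (B * B).trace := by
      simp only [Matrix.trace, Matrix.diag, Matrix.mul_apply]
      exact Finset.sum_congr rfl fun i _ => Finset.sum_congr rfl fun j _ => by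
        rw [symmB i j]
    have h2 : (B * B).trace = ∑ i, mu i ^ 2 := by
      rw [hBspec, hw_conj_mul V E E hV1, hw_trace_conj V _ hV1, hEdef,
        Matrix.diagonal_mul_diagonal, Matrix.trace_diagonal]
      exact Finset.sum_congr rfl fun i _ => (sq (mu i)).symm
    rw [h1, h2]
  have traceAB : ∑ i, ∑ j, A i j * B i j = ∑ i, ∑ j, lam i * mu j * S i j := by
    have h1 : ∑ i, ∑ j, A i j * B i j = (A * B).trace := by
      simp only [Matrix.trace, Matrix.diag, Matrix.mul_apply]
      exact Finset.sum_congr rfl fun i _ => Finset.sum_congr rfl fun j _ => by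
        rw [symmB i j]
    have h2 : A * B = U * (D * W * E * star W) * star U := by
      rw [hAspec, hBspec, hWdef, hWstar]
      simp only [Matrix.mul_assoc]
      rw [hU2, Matrix.mul_one]
    have h3 : (A * B).trace = (D * W * E * star W).trace := by
      rw [h2, hw_trace_conj U _ hU1]
    have hent : ∀ i j, (D * W * E) i j = lam i * W i j * mu j := by
      intro i j
      rw [hEdef, Matrix.mul_diagonal, hDdef, Matrix.diagonal_mul]
    have h4 : (D * W * E * star W).trace = ∑ i, ∑ j, lam i * mu j * S i j := by
      show (∑ i, (D * W * E * star W) i i) = _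
      refine Finset.sum_congr rfl fun i _ => ?_
      rw [Matrix.mul_apply]
      refine Finset.sum_congr rfl fun j _ => ?_
      rw [hent i j, Matrix.star_apply, star_trivial, hSapp]; ring
    rw [h1, h3, h4]
  -- Birkhoff step: replace S by a best permutation
  obtain ⟨σ₀, -, hmax⟩ := Finset.exists_max_image Finset.univ
    (fun σ : Equiv.Perm (Fin n) => ∑ i, lam i * mu (σ i)) ⟨1, Finset.mem_univ 1⟩
  have key : ∑ i, ∑ j, lam i * mu j * S i j
      = ∑ σ : Equiv.Perm (Fin n), w σ * ∑ i, lam i * mu (σ i) := by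
    have hSrep : ∀ i j, S i j = ∑ σ : Equiv.Perm (Fin n),
        w σ * (if σ i = j then (1 : ℝ) else 0) := by
      intro i j
      have h := Matrix.ext_iff.2 hwS i j
      simpa [Matrix.sum_apply, Matrix.smul_apply, Equiv.Perm.permMatrix,
        PEquiv.toMatrix_apply, Equiv.toPEquiv_apply] using h.symm
    calc ∑ i, ∑ j, lam i * mu j * S i j
        = ∑ i, ∑ j, ∑ σ : Equiv.Perm (Fin n),
            lam i * mu j * (w σ * (if σ i = j then (1:ℝ) else 0)) := by
          refine Finset.sum_congr rfl fun i _ => Finset.sum_congr rfl fun j _ => ?_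
          rw [hSrep, Finset.mul_sum]
      _ = ∑ i, ∑ σ : Equiv.Perm (Fin n), ∑ j,
            lam i * mu j * (w σ * (if σ i = j then (1:ℝ) else 0)) :=
          Finset.sum_congr rfl fun i _ => Finset.sum_comm
      _ = ∑ σ : Equiv.Perm (Fin n), ∑ i, ∑ j,
            lam i * mu j * (w σ * (if σ i = j then (1:ℝ) else 0)) :=
          Finset.sum_comm
      _ = ∑ σ : Equiv.Perm (Fin n), w σ * ∑ i, lam i * mu (σ i) := by
          refine Finset.sum_congr rfl fun σ _ => ?_
          rw [Finset.mul_sum]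
          refine Finset.sum_congr rfl fun i _ => ?_
          simp only [mul_ite, mul_one, mul_zero]
          rw [Finset.sum_ite_eq Finset.univ (σ i)
            (fun j => lam i * mu j * w σ)]
          simp [mul_comm, mul_left_comm]
  have hge : ∑ i, ∑ j, lam i * mu j * S i j ≤ ∑ i, lam i * mu (σ₀ i) := by
    rw [key]
    calc ∑ σ : Equiv.Perm (Fin n), w σ * ∑ i, lam i * mu (σ i)
        ≤ ∑ σ : Equiv.Perm (Fin n), w σ * ∑ i, lam i * mu (σ₀ i) :=
          Finset.sum_le_sum fun σ _ =>
            mul_le_mul_of_nonneg_left (hmax σ (Finset.mem_univ σ)) (hw0 σ)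
      _ = ∑ i, lam i * mu (σ₀ i) := by rw [← Finset.sum_mul, hw1, one_mul]
  refine ⟨σ₀, ?_⟩
  have expandL : ∑ i, (lam i - mu (σ₀ i)) ^ 2
      = ∑ i, lam i ^ 2 + ∑ i, mu i ^ 2 - 2 * ∑ i, lam i * mu (σ₀ i) := by
    rw [← Equiv.sum_comp σ₀ (fun i => mu i ^ 2), Finset.mul_sum,
      ← Finset.sum_add_distrib, ← Finset.sum_sub_distrib]
    exact Finset.sum_congr rfl fun i _ => by ring
  have expandR : ∑ i, ∑ j, (A i j - B i j) ^ 2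
      = (∑ i, ∑ j, A i j * A i j) + (∑ i, ∑ j, B i j * B i j)
        - 2 * (∑ i, ∑ j, A i j * B i j) := by
    rw [Finset.mul_sum, ← Finset.sum_add_distrib, ← Finset.sum_sub_distrib]
    refine Finset.sum_congr rfl fun i _ => ?_
    rw [Finset.mul_sum, ← Finset.sum_add_distrib, ← Finset.sum_sub_distrib]
    exact Finset.sum_congr rfl fun j _ => by ring
  rw [expandL, expandR, traceA, traceB, traceAB]
  linarith [hge]
end
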